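/- Let N : ℝⁿ → Matrix (Fin n) (Fin n) ℝ be a smooth (1,1)-tensor field whose Nijenhuis torsion vanishes identically. Then for every k ≥ 1, every index i, and every point: Σ_j N^j_i ∂_j ( Tr(N^k) ) = (k/(k+1)) ∂_i ( Tr(N^{k+1}) ). Equivalently, ᵗN d I_k = d I_{k+1}, where I_k = Tr(N^k)/k. -/

import Mathlib

open Matrix BigOperators

/-- Partial derivative in the `l`-th coordinate direction. -/
noncomputable def pd {n : ℕ} (l : Fin n) (f : (Fin n → ℝ) → ℝ) (x : Fin n → ℝ) : ℝ :=
  fderiv ℝ f x (Pi.single l 1)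

/-- The Nijenhuis torsion of a (1,1)-tensor field `N`, in coordinates. -/
noncomputable def nijenhuisTorsion {n : ℕ}
    (N : (Fin n → ℝ) → Matrix (Fin n) (Fin n) ℝ)
    (k i j : Fin n) (x : Fin n → ℝ) : ℝ :=
  ∑ l, (N x l i * pd l (fun y => N y k j) x
      - N x l j * pd l (fun y => N y k i) x
      - N x k l * (pd i (fun y => N y l j) x - pd j (fun y => N y l i) x))

section aux
variable {n : ℕ}

lemma pd_sum {ι : Type*} (s : Finset ι) (l : Fin n) (f : ι → (Fin n → ℝ) → ℝ) {x : Fin n → ℝ}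
    (hf : ∀ i ∈ s, DifferentiableAt ℝ (f i) x) :
    pd l (fun y => ∑ i ∈ s, f i y) x = ∑ i ∈ s, pd l (f i) x := by
  unfold pd
  rw [fderiv_fun_sum hf]
  simp

lemma pd_mul (l : Fin n) {f g : (Fin n → ℝ) → ℝ} {x : Fin n → ℝ}
    (hf : DifferentiableAt ℝ f x) (hg : DifferentiableAt ℝ g x) :
    pd l (fun y => f y * g y) x = f x * pd l g x + g x * pd l f x := by
  unfold pd
  rw [fderiv_fun_mul hf hg]
  simp

lemma pd_const (l : Fin n) (c : ℝ) (x : Fin n → ℝ) : pd l (fun _ => c) x = 0 := by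
  unfold pd; simp

lemma sum_comm3 (F : Fin n → Fin n → Fin n → ℝ) :
    (∑ a, ∑ b, ∑ c, F a b c) = ∑ c, ∑ b, ∑ a, F a b c :=
  calc (∑ a, ∑ b, ∑ c, F a b c)
      = ∑ b, ∑ a, ∑ c, F a b c := Finset.sum_comm
    _ = ∑ b, ∑ c, ∑ a, F a b c := Finset.sum_congr rfl fun _ _ => Finset.sum_comm
    _ = ∑ c, ∑ b, ∑ a, F a b c := Finset.sum_comm

lemma sum_comm3' (F : Fin n → Fin n → Fin n → ℝ) :
    (∑ a, ∑ b, ∑ c, F a b c) = ∑ c, ∑ a, ∑ b, F a b c :=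
  calc (∑ a, ∑ b, ∑ c, F a b c)
      = ∑ a, ∑ c, ∑ b, F a b c := Finset.sum_congr rfl fun _ _ => Finset.sum_comm
    _ = ∑ c, ∑ a, ∑ b, F a b c := Finset.sum_comm

variable (N : (Fin n → ℝ) → Matrix (Fin n) (Fin n) ℝ)

lemma entry_pow_contDiff (hN : ∀ i j, ContDiff ℝ (⊤ : ℕ∞) fun x => N x i j) (k : ℕ) (a b : Fin n) :
    ContDiff ℝ (⊤ : ℕ∞) (fun x => ((N x) ^ k) a b) := by
  induction k generalizing a b with
  | zero => simp only [pow_zero]; exact contDiff_const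
  | succ k ih =>
    have : (fun x => ((N x) ^ (k+1)) a b) = fun x => ∑ c, N x a c * ((N x) ^ k) c b := by
      funext y; rw [pow_succ', Matrix.mul_apply]
    rw [this]
    exact ContDiff.sum fun c _ => (hN a c).mul (ih c b)

lemma pd_pow_succ (hN : ∀ i j, ContDiff ℝ (⊤ : ℕ∞) fun x => N x i j) (k : ℕ) (l a b : Fin n)
    (x : Fin n → ℝ) :
    pd l (fun y => ((N y) ^ (k+1)) a b) x
      = ∑ c, (pd l (fun y => N y a c) x * ((N x) ^ k) c b
            + N x a c * pd l (fun y => ((N y) ^ k) c b) x) := by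
  have h1 : (fun y => ((N y) ^ (k+1)) a b) = fun y => ∑ c, N y a c * ((N y) ^ k) c b := by
    funext y; rw [pow_succ', Matrix.mul_apply]
  rw [h1, pd_sum _ _ _ (fun c _ => ((hN a c).mul (entry_pow_contDiff N hN k c b)).differentiable (by simp) |>.differentiableAt)]
  refine Finset.sum_congr rfl fun c _ => ?_
  rw [pd_mul _ ((hN a c).differentiable (by simp) |>.differentiableAt)
      ((entry_pow_contDiff N hN k c b).differentiable (by simp) |>.differentiableAt)]
  ring

lemma contract (hN : ∀ i j, ContDiff ℝ (⊤ : ℕ∞) fun x => N x i j) :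
    ∀ (k m : ℕ) (l : Fin n) (x : Fin n → ℝ),
    ∑ a, ∑ b, ((N x) ^ m) b a * pd l (fun y => ((N y) ^ (k+1)) a b) x
      = ((k : ℝ) + 1) * ∑ a, ∑ b, ((N x) ^ (m + k)) b a * pd l (fun y => N y a b) x := by
  intro k
  induction k with
  | zero =>
    intro m l x
    simp only [pd_pow_succ N hN 0 l, pow_zero, Matrix.one_apply, Nat.add_zero,
      Nat.cast_zero, zero_add, one_mul]
    refine Finset.sum_congr rfl fun a _ => Finset.sum_congr rfl fun b _ => ?_
    congr 1
    have h2 : ∀ c : Fin n, pd l (fun _ => if c = b then (1:ℝ) else 0) x = 0 :=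
      fun c => pd_const l _ x
    simp only [h2, mul_zero, add_zero]
    simp [Finset.sum_ite_eq']
  | succ k ih =>
    intro m l x
    have expand : ∀ a b : Fin n, pd l (fun y => ((N y) ^ (k+1+1)) a b) x
        = ∑ c, (pd l (fun y => N y a c) x * ((N x) ^ (k+1)) c b
            + N x a c * pd l (fun y => ((N y) ^ (k+1)) c b) x) := fun a b =>
      pd_pow_succ N hN (k+1) l a b x
    have key : ∑ a, ∑ b, ((N x) ^ m) b a * pd l (fun y => ((N y) ^ (k+1+1)) a b) x
        = ((k : ℝ) + 1 + 1) * ∑ a, ∑ b, ((N x) ^ (m + (k + 1))) b a * pd l (fun y => N y a b) x := by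
      calc ∑ a, ∑ b, ((N x) ^ m) b a * pd l (fun y => ((N y) ^ (k+1+1)) a b) x
          = (∑ a, ∑ b, ∑ c, ((N x) ^ m) b a * (pd l (fun y => N y a c) x * ((N x) ^ (k+1)) c b))
          + (∑ a, ∑ b, ∑ c, ((N x) ^ m) b a * (N x a c * pd l (fun y => ((N y) ^ (k+1)) c b) x)) := by
            simp only [expand, Finset.mul_sum, mul_add, Finset.sum_add_distrib]
        _ = (∑ a, ∑ c, ((N x) ^ ((k+1) + m)) c a * pd l (fun y => N y a c) x)
          + (∑ c, ∑ b, ((N x) ^ (m+1)) b c * pd l (fun y => ((N y) ^ (k+1)) c b) x) := by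
            congr 1
            · refine Finset.sum_congr rfl fun a _ => ?_
              rw [Finset.sum_comm]
              refine Finset.sum_congr rfl fun c _ => ?_
              rw [pow_add (N x) (k+1) m, Matrix.mul_apply, Finset.sum_mul]
              refine Finset.sum_congr rfl fun b _ => ?_
              ring
            · rw [sum_comm3]
              refine Finset.sum_congr rfl fun c _ => Finset.sum_congr rfl fun b _ => ?_
              rw [pow_succ (N x) m, Matrix.mul_apply, Finset.sum_mul]
              refine Finset.sum_congr rfl fun a _ => ?_
              ring
        _ = (∑ a, ∑ c, ((N x) ^ (m + (k+1))) c a * pd l (fun y => N y a c) x)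
          + ((k : ℝ) + 1) * ∑ a, ∑ b, ((N x) ^ (m + 1 + k)) b a * pd l (fun y => N y a b) x := by
            rw [ih (m+1) l x, add_comm (k+1) m]
        _ = ((k : ℝ) + 1 + 1) * ∑ a, ∑ b, ((N x) ^ (m + (k + 1))) b a * pd l (fun y => N y a b) x := by
            have h3 : m + 1 + k = m + (k + 1) := by omega
            rw [h3]; ring
    rw [key]
    push_cast
    ring

lemma pd_trace_pow (hN : ∀ i j, ContDiff ℝ (⊤ : ℕ∞) fun x => N x i j) (k : ℕ) (l : Fin n)
    (x : Fin n → ℝ) :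
    pd l (fun y => ∑ m, ((N y) ^ (k+1)) m m) x
      = ((k : ℝ) + 1) * ∑ a, ∑ b, ((N x) ^ k) b a * pd l (fun y => N y a b) x := by
  rw [pd_sum _ _ _ (fun m _ =>
    ((entry_pow_contDiff N hN (k+1) m m).differentiable (by simp)).differentiableAt)]
  have h : ∀ a : Fin n, pd l (fun y => ((N y) ^ (k+1)) a a) x
      = ∑ b, ((N x) ^ 0) b a * pd l (fun y => ((N y) ^ (k+1)) a b) x := by
    intro a
    simp [Matrix.one_apply, Finset.sum_ite_eq]
  simp only [h]
  have := contract N hN k 0 l x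
  rw [this, Nat.zero_add]

end aux

theorem transpose_N_d_trace_pow
    {n : ℕ} (hn : 1 ≤ n)
    (N : (Fin n → ℝ) → Matrix (Fin n) (Fin n) ℝ)
    (hN : ∀ i j : Fin n, ContDiff ℝ (⊤ : ℕ∞) (fun x => N x i j))
    (hT : ∀ (k i j : Fin n) (x : Fin n → ℝ), nijenhuisTorsion N k i j x = 0) :
    ∀ (k : ℕ), 1 ≤ k → ∀ (i : Fin n) (x : Fin n → ℝ),
      ∑ j, N x j i * pd j (fun y => ∑ m, ((N y) ^ k) m m) x
        = ((k : ℝ) / ((k : ℝ) + 1)) * pd i (fun y => ∑ m, ((N y) ^ (k + 1)) m m) x := by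
  intro k hk i x
  obtain ⟨p, rfl⟩ : ∃ p, k = p + 1 := ⟨k - 1, (Nat.succ_pred_eq_of_pos hk).symm⟩
  -- the four contracted torsion sums
  set S1 := ∑ a, ∑ b, ∑ l, ((N x) ^ p) b a * (N x l i * pd l (fun y => N y a b) x) with hS1
  set S2 := ∑ a, ∑ b, ∑ l, ((N x) ^ p) b a * (N x l b * pd l (fun y => N y a i) x) with hS2
  set S3 := ∑ a, ∑ b, ∑ l, ((N x) ^ p) b a * (N x a l * pd i (fun y => N y l b) x) with hS3
  set S4 := ∑ a, ∑ b, ∑ l, ((N x) ^ p) b a * (N x a l * pd b (fun y => N y l i) x) with hS4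
  set Q := ∑ a, ∑ b, ((N x) ^ (p+1)) b a * pd i (fun y => N y a b) x with hQ
  -- torsion contraction gives S1 - S2 - S3 + S4 = 0
  have hzero : S1 - S2 - S3 + S4 = 0 := by
    have h0 : ∑ a, ∑ b, ((N x) ^ p) b a * nijenhuisTorsion N a i b x = 0 := by
      simp [hT]
    calc S1 - S2 - S3 + S4
        = ∑ a, ∑ b, ∑ l, (((N x) ^ p) b a * (N x l i * pd l (fun y => N y a b) x)
            - ((N x) ^ p) b a * (N x l b * pd l (fun y => N y a i) x)
            - ((N x) ^ p) b a * (N x a l * pd i (fun y => N y l b) x)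
            + ((N x) ^ p) b a * (N x a l * pd b (fun y => N y l i) x)) := by
          simp only [hS1, hS2, hS3, hS4, Finset.sum_sub_distrib, Finset.sum_add_distrib]
      _ = ∑ a, ∑ b, ((N x) ^ p) b a * nijenhuisTorsion N a i b x := by
          refine Finset.sum_congr rfl fun a _ => Finset.sum_congr rfl fun b _ => ?_
          rw [nijenhuisTorsion, Finset.mul_sum]
          refine Finset.sum_congr rfl fun l _ => ?_
          ring
      _ = 0 := h0
  -- S3 = Q
  have hS3Q : S3 = Q := by
    rw [hS3, sum_comm3, hQ]
    refine Finset.sum_congr rfl fun l _ => Finset.sum_congr rfl fun b _ => ?_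
    rw [pow_succ (N x) p, Matrix.mul_apply, Finset.sum_mul]
    refine Finset.sum_congr rfl fun a _ => ?_
    ring
  -- S2 = S4
  have hS24 : S2 = S4 := by
    have h2 : S2 = ∑ a, ∑ l, ((N x) ^ (p+1)) l a * pd l (fun y => N y a i) x := by
      rw [hS2]
      refine Finset.sum_congr rfl fun a _ => ?_
      rw [Finset.sum_comm]
      refine Finset.sum_congr rfl fun l _ => ?_
      rw [pow_succ' (N x) p, Matrix.mul_apply, Finset.sum_mul]
      refine Finset.sum_congr rfl fun b _ => ?_
      ring
    have h4 : S4 = ∑ a, ∑ l, ((N x) ^ (p+1)) l a * pd l (fun y => N y a i) x := by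
      rw [hS4, sum_comm3]
      refine Finset.sum_congr rfl fun l _ => Finset.sum_congr rfl fun b _ => ?_
      rw [pow_succ (N x) p, Matrix.mul_apply, Finset.sum_mul]
      refine Finset.sum_congr rfl fun a _ => ?_
      ring
    rw [h2, h4]
  have hS1Q : S1 = Q := by linarith
  -- left-hand side
  have hL : ∑ j, N x j i * pd j (fun y => ∑ m, ((N y) ^ (p+1)) m m) x
      = ((p : ℝ) + 1) * S1 := by
    simp only [pd_trace_pow N hN p]
    have hj : ∀ j : Fin n, N x j i * (((p : ℝ) + 1) * ∑ a, ∑ b, ((N x) ^ p) b a * pd j (fun y => N y a b) x)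
        = ((p : ℝ) + 1) * ∑ a, ∑ b, ((N x) ^ p) b a * (N x j i * pd j (fun y => N y a b) x) := by
      intro j
      simp only [Finset.mul_sum]
      exact Finset.sum_congr rfl fun a _ => Finset.sum_congr rfl fun b _ => by ring
    simp only [hj]
    rw [← Finset.mul_sum, hS1]
    congr 1
    exact (sum_comm3' fun a b l => ((N x) ^ p) b a * (N x l i * pd l (fun y => N y a b) x)).symm
  -- right-hand side
  have hR : pd i (fun y => ∑ m, ((N y) ^ (p + 1 + 1)) m m) x = (((p : ℝ) + 1) + 1) * Q := by
    have h := pd_trace_pow N hN (p+1) i x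
    push_cast at h
    rw [h, hQ]
  rw [hL, hR, hS1Q]
  have hne : ((p : ℝ) + 1) + 1 ≠ 0 := by positivity
  push_cast
  field_simp
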